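/- Let C be an HFP code of length 4t such that (C,*) is the internal direct product ⟨a⟩ × ⟨u⟩ with a of *-order 4t (an HFP(4t,2_u)-code, i.e., a circulant Hadamard code), and suppose dim K(C) = 1. Then there exists an HFP(4t,4_u)-code Ĉ of length 8t — that is, an HFP code of length 8t such that (Ĉ,*) is an abelian group of order 16t which is the internal direct product ⟨â⟩ × ⟨b̂⟩ with â of order 4t, b̂ of order 4 and b̂^2 equal to the all-one vector of length 8t — whose kernel is exactly K(Ĉ) = {e, u, (e_{4t},u_{4t}), (u_{4t},e_{4t})}. -/

import Mathlib

open Finset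

abbrev Vec (n : ℕ) := Fin n → ZMod 2

def allOne (n : ℕ) : Vec n := fun _ => 1

def permAct {n : ℕ} (σ : Equiv.Perm (Fin n)) (x : Vec n) : Vec n := fun i => x (σ⁻¹ i)

/-- An Hadamard full propelinear code of length `n`:
an Hadamard code together with a full propelinear structure. -/
structure HFPCode (n : ℕ) where
  C : Set (Vec n)
  π : Vec n → Equiv.Perm (Fin n)
  zero_mem : (0 : Vec n) ∈ C
  card_eq : C.ncard = 2 * n
  allOne_mem : allOne n ∈ C
  add_allOne_mem : ∀ x ∈ C, x + allOne n ∈ C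
  dist_eq : ∀ x ∈ C, ∀ y ∈ C, x ≠ y → y ≠ x + allOne n → 2 * hammingDist x y = n
  mul_mem : ∀ x ∈ C, ∀ y ∈ C, x + permAct (π x) y ∈ C
  π_mul : ∀ x ∈ C, ∀ y ∈ C, π (x + permAct (π x) y) = π x * π y
  π_zero : π 0 = 1
  π_allOne : π (allOne n) = 1
  π_fixedfree : ∀ x ∈ C, x ≠ 0 → x ≠ allOne n → ∀ i, π x i ≠ i

namespace HFPCode

variable {n : ℕ} (H : HFPCode n)

/-- The propelinear group operation `x * y = x + π_x(y)`. -/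
def mul (x y : Vec n) : Vec n := x + permAct (H.π x) y

/-- `*`-powers: `x^0 = e`, `x^(i+1) = x * x^i`. -/
def pow (x : Vec n) : ℕ → Vec n
  | 0 => 0
  | i + 1 => H.mul x (pow x i)

end HFPCode

/-- The kernel `K(C) = {z : z + C = C}`. -/
def kerSet {n : ℕ} (C : Set (Vec n)) : Set (Vec n) := {z | (fun x => z + x) '' C = C}

/-- Dimension of the kernel of a code. -/
noncomputable def kerDim {n : ℕ} (C : Set (Vec n)) : ℕ :=
  Module.finrank (ZMod 2) (Submodule.span (ZMod 2) (kerSet C))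

/-- The rank of a code: dimension of its linear span. -/
noncomputable def rankOf {n : ℕ} (C : Set (Vec n)) : ℕ :=
  Module.finrank (ZMod 2) (Submodule.span (ZMod 2) C)

namespace HFPCode

/-- `C` is an `HFP(4t_u,2)`-code with generators `a`, `b`: `(C,*)` is an abelian group
of order `8t` generated by `a` of order `4t` with `a^{2t} = u` and `b` of order `2`
with `b ∉ ⟨a⟩`, so `(C,*) ≅ C_{4t} × C_2`. -/
def Is4tu2 (t : ℕ) (H : HFPCode (4 * t)) (a b : Vec (4 * t)) : Prop :=
  a ∈ H.C ∧ b ∈ H.C ∧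
  (∀ x ∈ H.C, ∀ y ∈ H.C, H.mul x y = H.mul y x) ∧
  H.pow a (4 * t) = 0 ∧ (∀ j : ℕ, 0 < j → j < 4 * t → H.pow a j ≠ 0) ∧
  H.pow a (2 * t) = allOne (4 * t) ∧
  H.pow b 2 = 0 ∧ b ≠ 0 ∧
  (∀ i : ℕ, b ≠ H.pow a i) ∧
  (∀ x ∈ H.C, ∃ i j : ℕ, x = H.mul (H.pow a i) (H.pow b j))

/-- `C` is an `HFP(2t,2,2_u)`-code with generators `a`, `b` (and `u`): `(C,*)` is an
abelian group of order `8t` which is the internal direct product `⟨a⟩ × ⟨b⟩ × ⟨u⟩`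
with `a` of order `2t` and `b` of order `2`, so `(C,*) ≅ C_{2t} × C_2 × C_2`. -/
def Is2t22u (t : ℕ) (H : HFPCode (4 * t)) (a b : Vec (4 * t)) : Prop :=
  a ∈ H.C ∧ b ∈ H.C ∧
  (∀ x ∈ H.C, ∀ y ∈ H.C, H.mul x y = H.mul y x) ∧
  H.pow a (2 * t) = 0 ∧ (∀ j : ℕ, 0 < j → j < 2 * t → H.pow a j ≠ 0) ∧
  H.pow b 2 = 0 ∧ b ≠ 0 ∧ allOne (4 * t) ≠ 0 ∧
  (∀ i j k : ℕ, i < 2 * t → j < 2 → k < 2 →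
    H.mul (H.mul (H.pow a i) (H.pow b j)) (H.pow (allOne (4 * t)) k) = 0 →
      i = 0 ∧ j = 0 ∧ k = 0) ∧
  (∀ x ∈ H.C, ∃ i j k : ℕ,
    x = H.mul (H.mul (H.pow a i) (H.pow b j)) (H.pow (allOne (4 * t)) k))

/-- `C` is an `HFP(2t,4_u)`-code with generators `a`, `b`: `(C,*)` is an abelian group
of order `8t` which is the internal direct product `⟨a⟩ × ⟨b⟩` with `a` of order `2t`,
`b` of order `4` and `b² = u`, so `(C,*) ≅ C_{2t} × C_4`. -/
def Is2t4u (t : ℕ) (H : HFPCode (4 * t)) (a b : Vec (4 * t)) : Prop :=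
  a ∈ H.C ∧ b ∈ H.C ∧
  (∀ x ∈ H.C, ∀ y ∈ H.C, H.mul x y = H.mul y x) ∧
  H.pow a (2 * t) = 0 ∧ (∀ j : ℕ, 0 < j → j < 2 * t → H.pow a j ≠ 0) ∧
  H.pow b 4 = 0 ∧ (∀ j : ℕ, 0 < j → j < 4 → H.pow b j ≠ 0) ∧
  H.pow b 2 = allOne (4 * t) ∧
  (∀ i j : ℕ, i < 2 * t → j < 4 → H.mul (H.pow a i) (H.pow b j) = 0 → i = 0 ∧ j = 0) ∧
  (∀ x ∈ H.C, ∃ i j : ℕ, x = H.mul (H.pow a i) (H.pow b j))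

/-- The permutation associated to `a` is normalized to
`(1,2,…,2t)(2t+1,…,4t)` (0-indexed here). -/
def NormPiA (t : ℕ) (H : HFPCode (4 * t)) (a : Vec (4 * t)) : Prop :=
  ∀ i : Fin (4 * t), ((H.π a) i).val =
    if i.val < 2 * t then (i.val + 1) % (2 * t) else 2 * t + (i.val + 1) % (2 * t)

/-- The permutation associated to `b` is normalized to
`(1,2t+1)(2,2t+2)⋯(2t,4t)` (0-indexed here). -/
def NormPiB (t : ℕ) (H : HFPCode (4 * t)) (b : Vec (4 * t)) : Prop :=
  ∀ i : Fin (4 * t), ((H.π b) i).val = (i.val + 2 * t) % (4 * t)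

end HFPCode

/-- The vector `(e_{2t}, u_{2t})`: `0` on the first half, `1` on the second half. -/
def euVec (t : ℕ) : Vec (4 * t) := fun i => if i.val < 2 * t then 0 else 1

/-- The vector `ω_{4t} = (1,0,1,0,…,1,0)`. -/
def omegaVec (t : ℕ) : Vec (4 * t) := fun i => if i.val % 2 = 0 then 1 else 0

/-- The vector `(ω_{2t}, ω_{2t} + u_{2t})`. -/
def omegaCompVec (t : ℕ) : Vec (4 * t) := fun i =>
  if i.val < 2 * t then (if i.val % 2 = 0 then 1 else 0)
  else (if i.val % 2 = 0 then 0 else 1)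

/-- `C` is linear if it is an `F₂`-subspace, i.e. coincides with its linear span. -/
def IsLinearCode {n : ℕ} (C : Set (Vec n)) : Prop :=
  C = (Submodule.span (ZMod 2) C : Set (Vec n))

/-- The vector `(e_{4t}, u_{4t})` of length `8t`. -/
def euVec8 (t : ℕ) : Vec (8 * t) := fun i => if i.val < 4 * t then 0 else 1

/-- The vector `(u_{4t}, e_{4t})` of length `8t`. -/
def ueVec8 (t : ℕ) : Vec (8 * t) := fun i => if i.val < 4 * t then 1 else 0

/-!
The code `Ĉ` is the doubling `{(x, x), (x, x + u) : x ∈ C}`, with `π_{(x,x)} = (π_x, π_x)` and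
`π_{(x,x+u)} = (π_x, π_x) ∘ swap`. It is again an HFP code: `(x, x)` and `(y, y + u)` are at
distance `d(x, y) + d(x, y + u) = 4t`, and the other distances are twice those in `C`.
With `â = (a, a)` and `b̂ = (e, u)` one finds `b̂² = u`, `b̂⁴ = e`, `âⁱ * b̂ʲ = (aⁱ + ε, aⁱ + δ)` with
`(ε, δ)` running through `(e, e), (e, u), (u, u), (u, e)`, so `⟨â⟩ × ⟨b̂⟩` is direct and exhausts
`Ĉ` because `⟨a⟩ × ⟨u⟩` does so in `C`. Finally a kernel vector of `Ĉ` is `(z, z)` or `(z, z + u)`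
with `z ∈ K(C) = {e, u}`.
-/

section Vectors

variable {n : ℕ}

lemma allOne_ne_zero (hn : 0 < n) : allOne n ≠ 0 := fun h => by
  simpa [allOne] using congrFun h ⟨0, hn⟩

lemma add_allOne_ne_self (hn : 0 < n) (x : Vec n) : x + allOne n ≠ x := fun h =>
  allOne_ne_zero hn (by simpa using h)

@[simp] lemma permAct_one (x : Vec n) : permAct 1 x = x := rfl

@[simp] lemma permAct_add (σ : Equiv.Perm (Fin n)) (x y : Vec n) :
    permAct σ (x + y) = permAct σ x + permAct σ y := rfl

@[simp] lemma permAct_zero (σ : Equiv.Perm (Fin n)) : permAct σ 0 = 0 := rfl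

@[simp] lemma permAct_allOne (σ : Equiv.Perm (Fin n)) : permAct σ (allOne n) = allOne n := rfl

lemma permAct_mul (σ τ : Equiv.Perm (Fin n)) (x : Vec n) :
    permAct (σ * τ) x = permAct σ (permAct τ x) := rfl

lemma permAct_of_eq_zero_or_eq_allOne (σ : Equiv.Perm (Fin n)) {p : Vec n}
    (hp : p = 0 ∨ p = allOne n) : permAct σ p = p := by
  rcases hp with rfl | rfl <;> simp

lemma hammingDist_add_right_eq (x y z : Vec n) :
    hammingDist (x + z) (y + z) = hammingDist x y := by
  simp only [hammingDist_eq_hammingNorm, neg_add_rev]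
  congr 1
  abel

lemma hammingDist_add_hammingDist_add_allOne (x y : Vec n) :
    hammingDist x y + hammingDist x (y + allOne n) = n := by
  have hcompl : ∀ a b : ZMod 2, a ≠ b + 1 ↔ ¬a ≠ b := by decide
  simp only [hammingDist, Pi.add_apply, allOne, hcompl]
  rw [Finset.card_filter_add_card_filter_not, Finset.card_univ, Fintype.card_fin]

end Vectors

namespace HFPCode

variable {n : ℕ} (H : HFPCode n)

lemma pos (H : HFPCode n) : 0 < n := by
  have hC : 0 < H.C.ncard := (Set.ncard_pos (Set.toFinite _)).mpr ⟨0, H.zero_mem⟩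
  have := H.card_eq
  omega

lemma mul_of_eq_zero_or_eq_allOne (x : Vec n) {p : Vec n} (hp : p = 0 ∨ p = allOne n) :
    H.mul x p = x + p := by
  rw [mul, permAct_of_eq_zero_or_eq_allOne _ hp]

lemma mul_zero (x : Vec n) : H.mul x 0 = x := by
  rw [H.mul_of_eq_zero_or_eq_allOne x (.inl rfl), add_zero]

lemma zero_mul (x : Vec n) : H.mul 0 x = x := by
  rw [mul, H.π_zero, permAct_one, zero_add]

lemma mul_add_allOne (x y : Vec n) : H.mul x (y + allOne n) = H.mul x y + allOne n := by
  simp only [mul, permAct_add, permAct_allOne, add_assoc]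

lemma π_mul_eq_mul {x y : Vec n} (hx : x ∈ H.C) (hy : y ∈ H.C) :
    H.π (H.mul x y) = H.π x * H.π y :=
  H.π_mul x hx y hy

lemma π_add_allOne {x : Vec n} (hx : x ∈ H.C) : H.π (x + allOne n) = H.π x := by
  simpa [H.π_allOne] using H.π_mul x hx _ H.allOne_mem

lemma add_allOne_mul {x : Vec n} (hx : x ∈ H.C) (y : Vec n) :
    H.mul (x + allOne n) y = H.mul x y + allOne n := by
  rw [mul, mul, H.π_add_allOne hx, add_right_comm]

lemma mul_mem' {x y : Vec n} (hx : x ∈ H.C) (hy : y ∈ H.C) : H.mul x y ∈ H.C :=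
  H.mul_mem x hx y hy

lemma mul_assoc {x y : Vec n} (hx : x ∈ H.C) (hy : y ∈ H.C) (z : Vec n) :
    H.mul (H.mul x y) z = H.mul x (H.mul y z) := by
  simp only [mul, H.π_mul x hx y hy, permAct_mul, permAct_add, add_assoc]

lemma pow_succ (x : Vec n) (i : ℕ) : H.pow x (i + 1) = H.mul x (H.pow x i) := rfl

lemma pow_mem {a : Vec n} (ha : a ∈ H.C) : ∀ i, H.pow a i ∈ H.C
  | 0 => H.zero_mem
  | i + 1 => H.mul_mem' ha (pow_mem ha i)

lemma pow_add {a : Vec n} (ha : a ∈ H.C) (i j : ℕ) :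
    H.pow a (i + j) = H.mul (H.pow a i) (H.pow a j) := by
  induction i with
  | zero => rw [Nat.zero_add, pow, zero_mul]
  | succ i ih => rw [Nat.add_right_comm, pow_succ, ih, pow_succ, H.mul_assoc ha (H.pow_mem ha i)]

lemma pow_one (x : Vec n) : H.pow x 1 = x := H.mul_zero x

lemma pow_allOne (k : ℕ) : H.pow (allOne n) k = 0 ∨ H.pow (allOne n) k = allOne n := by
  induction k with
  | zero => exact .inl rfl
  | succ k ih =>
    rw [pow_succ, mul, H.π_allOne, permAct_one]
    rcases ih with h | h <;> rw [h]
    · exact .inr (add_zero _)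
    · exact .inl (ZModModule.add_self _)

section Generated

variable {a : Vec n}

lemma exists_eq_pow_add
    (hgen : ∀ x ∈ H.C, ∃ i k : ℕ, x = H.mul (H.pow a i) (H.pow (allOne n) k)) {x : Vec n}
    (hx : x ∈ H.C) :
    ∃ i p, (p = 0 ∨ p = allOne n) ∧ x = H.pow a i + p := by
  obtain ⟨i, k, rfl⟩ := hgen x hx
  exact ⟨i, _, H.pow_allOne k, H.mul_of_eq_zero_or_eq_allOne _ (H.pow_allOne k)⟩

lemma mul_comm_of_generated (ha : a ∈ H.C)
    (hgen : ∀ x ∈ H.C, ∃ i k : ℕ, x = H.mul (H.pow a i) (H.pow (allOne n) k)) :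
    ∀ x ∈ H.C, ∀ y ∈ H.C, H.mul x y = H.mul y x := by
  intro x hx y hy
  obtain ⟨i, p, hp, rfl⟩ := H.exists_eq_pow_add hgen hx
  obtain ⟨j, q, hq, rfl⟩ := H.exists_eq_pow_add hgen hy
  have hij : H.mul (H.pow a i) (H.pow a j) = H.mul (H.pow a j) (H.pow a i) := by
    rw [← H.pow_add ha, ← H.pow_add ha, Nat.add_comm]
  rcases hp with rfl | rfl <;> rcases hq with rfl | rfl <;>
    simp only [add_zero, H.add_allOne_mul (H.pow_mem ha _), H.mul_add_allOne, hij]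

end Generated

end HFPCode

lemma mem_kerSet_iff {n : ℕ} {S : Set (Vec n)} {z : Vec n} :
    z ∈ kerSet S ↔ ∀ x ∈ S, z + x ∈ S := by
  refine ⟨fun hz x hx => hz ▸ Set.mem_image_of_mem _ hx, fun h => ?_⟩
  refine Set.Subset.antisymm (Set.image_subset_iff.mpr h) fun x hx => ⟨z + x, h x hx, ?_⟩
  show z + (z + x) = x
  rw [← add_assoc, ZModModule.add_self, zero_add]

namespace HFPCode

variable {n : ℕ} (H : HFPCode n)

lemma allOne_mem_kerSet : allOne n ∈ kerSet H.C :=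
  mem_kerSet_iff.mpr fun x hx => add_comm x _ ▸ H.add_allOne_mem x hx

lemma kerSet_eq_of_kerDim_eq_one (hker : kerDim H.C = 1) : kerSet H.C = {0, allOne n} := by
  refine Set.Subset.antisymm (fun z hz => ?_) ?_
  · set V := Submodule.span (ZMod 2) (kerSet H.C)
    have hu : (⟨allOne n, Submodule.subset_span H.allOne_mem_kerSet⟩ : V) ≠ 0 := fun h =>
      allOne_ne_zero H.pos (congrArg Subtype.val h)
    obtain ⟨c, hc⟩ :=
      (finrank_eq_one_iff_of_nonzero' _ hu).mp hker ⟨z, Submodule.subset_span hz⟩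
    have hc : c • allOne n = z := congrArg Subtype.val hc
    have hZMod2 : ∀ c : ZMod 2, c = 0 ∨ c = 1 := by decide
    rcases hZMod2 c with rfl | rfl
    · exact .inl (by rw [← hc, zero_smul])
    · exact .inr (by rw [← hc, one_smul]; rfl)
  · rintro z (rfl | rfl)
    · exact mem_kerSet_iff.mpr fun x hx => (zero_add x).symm ▸ hx
    · exact H.allOne_mem_kerSet

end HFPCode

section Doubling

variable {n m : ℕ} (e : Fin n ⊕ Fin n ≃ Fin m)

def pairVec (x y : Vec n) : Vec m := Sum.elim x y ∘ e.symm

@[simp] lemma pairVec_apply_inl (x y : Vec n) (j : Fin n) : pairVec e x y (e (.inl j)) = x j := by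
  simp [pairVec]

@[simp] lemma pairVec_apply_inr (x y : Vec n) (j : Fin n) : pairVec e x y (e (.inr j)) = y j := by
  simp [pairVec]

lemma pairVec_inj {x y x' y' : Vec n} : pairVec e x y = pairVec e x' y' ↔ x = x' ∧ y = y' := by
  refine ⟨fun h => ⟨funext fun j => ?_, funext fun j => ?_⟩, fun h => h.1 ▸ h.2 ▸ rfl⟩
  · simpa using congrFun h (e (.inl j))
  · simpa using congrFun h (e (.inr j))

lemma pairVec_add (x y x' y' : Vec n) :
    pairVec e x y + pairVec e x' y' = pairVec e (x + x') (y + y') := by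
  funext i
  obtain ⟨s | s, rfl⟩ := e.surjective i <;> simp

@[simp] lemma pairVec_zero : pairVec e (0 : Vec n) 0 = 0 := by
  funext i
  obtain ⟨s | s, rfl⟩ := e.surjective i <;> simp

@[simp] lemma pairVec_allOne : pairVec e (allOne n) (allOne n) = allOne m := by
  funext i
  obtain ⟨s | s, rfl⟩ := e.surjective i <;> simp [allOne]

lemma pairVec_add_allOne (x y : Vec n) :
    pairVec e x y + allOne m = pairVec e (x + allOne n) (y + allOne n) := by
  rw [← pairVec_allOne e, pairVec_add]

lemma hammingDist_pairVec (x y x' y' : Vec n) :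
    hammingDist (pairVec e x y) (pairVec e x' y') = hammingDist x x' + hammingDist y y' := by
  simp only [hammingDist, Finset.card_filter]
  rw [← e.sum_comp, Fintype.sum_sum_type]
  simp

def diagPerm (σ : Equiv.Perm (Fin n)) : Equiv.Perm (Fin m) := e.permCongr (σ.sumCongr σ)

def swapHalves : Equiv.Perm (Fin m) := e.permCongr (Equiv.sumComm (Fin n) (Fin n))

@[simp] lemma diagPerm_one : diagPerm e 1 = 1 := by
  ext i; simp [diagPerm, Equiv.Perm.sumCongr_one]

lemma diagPerm_mul (σ τ : Equiv.Perm (Fin n)) :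
    diagPerm e (σ * τ) = diagPerm e σ * diagPerm e τ := by
  rw [diagPerm, diagPerm, diagPerm, ← Equiv.permCongr_mul, Equiv.Perm.sumCongr_mul]

lemma swapHalves_mul_self : swapHalves e * swapHalves e = 1 := by
  ext i; obtain ⟨s | s, rfl⟩ := e.surjective i <;> simp [swapHalves]

lemma swapHalves_mul_diagPerm (σ : Equiv.Perm (Fin n)) :
    swapHalves e * diagPerm e σ = diagPerm e σ * swapHalves e := by
  ext i; obtain ⟨s | s, rfl⟩ := e.surjective i <;> simp [swapHalves, diagPerm]

lemma permAct_diagPerm (σ : Equiv.Perm (Fin n)) (x y : Vec n) :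
    permAct (diagPerm e σ) (pairVec e x y) = pairVec e (permAct σ x) (permAct σ y) := by
  funext i
  obtain ⟨s | s, rfl⟩ := e.surjective i <;> simp [permAct, diagPerm, Equiv.permCongr_def]

lemma permAct_swapHalves (x y : Vec n) :
    permAct (swapHalves e) (pairVec e x y) = pairVec e y x := by
  funext i
  obtain ⟨s | s, rfl⟩ := e.surjective i <;> simp [permAct, swapHalves, Equiv.permCongr_def]

lemma diagPerm_apply_ne {σ : Equiv.Perm (Fin n)} (hσ : ∀ j, σ j ≠ j) (i : Fin m) :
    diagPerm e σ i ≠ i := by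
  obtain ⟨s | s, rfl⟩ := e.surjective i <;> simpa [diagPerm] using hσ s

lemma diagPerm_mul_swapHalves_apply_ne (σ : Equiv.Perm (Fin n)) (i : Fin m) :
    (diagPerm e σ * swapHalves e) i ≠ i := by
  obtain ⟨s | s, rfl⟩ := e.surjective i <;> simp [diagPerm, swapHalves]

variable (H : HFPCode n)

def doubleCode : Set (Vec m) :=
  (fun x => pairVec e x x) '' H.C ∪ (fun x => pairVec e x (x + allOne n)) '' H.C

lemma pairVec_mem_doubleCode_iff {x y : Vec n} :
    pairVec e x y ∈ doubleCode e H ↔ x ∈ H.C ∧ (y = x ∨ y = x + allOne n) := by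
  simp only [doubleCode, Set.mem_union, Set.mem_image, pairVec_inj]
  constructor
  · rintro (⟨x', hx', rfl, rfl⟩ | ⟨x', hx', rfl, rfl⟩)
    exacts [⟨hx', .inl rfl⟩, ⟨hx', .inr rfl⟩]
  · rintro ⟨hx, rfl | rfl⟩
    exacts [.inl ⟨_, hx, rfl, rfl⟩, .inr ⟨_, hx, rfl, rfl⟩]

-- The `else` branch is meant for `(x, x + u)`; off the doubled code the value is irrelevant.
def doublePi (z : Vec m) : Equiv.Perm (Fin m) :=
  let x : Vec n := fun j => z (e (.inl j))
  if (fun j => z (e (.inr j))) = x then diagPerm e (H.π x) else diagPerm e (H.π x) * swapHalves e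

lemma doublePi_pairVec_self (x : Vec n) : doublePi e H (pairVec e x x) = diagPerm e (H.π x) := by
  simp [doublePi]

lemma doublePi_pairVec_add_allOne (x : Vec n) :
    doublePi e H (pairVec e x (x + allOne n)) = diagPerm e (H.π x) * swapHalves e := by
  have hne : (x + allOne n) ≠ x := add_allOne_ne_self H.pos x
  simp only [doublePi, pairVec_apply_inl, pairVec_apply_inr]
  exact if_neg hne

def doubleMul (z w : Vec m) : Vec m := z + permAct (doublePi e H z) w

lemma doubleMul_pairVec_self (x y y' : Vec n) :
    doubleMul e H (pairVec e x x) (pairVec e y y') = pairVec e (H.mul x y) (H.mul x y') := by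
  rw [doubleMul, doublePi_pairVec_self, permAct_diagPerm, pairVec_add]
  rfl

lemma doubleMul_pairVec_add_allOne (x y y' : Vec n) :
    doubleMul e H (pairVec e x (x + allOne n)) (pairVec e y y') =
      pairVec e (H.mul x y') (H.mul x y + allOne n) := by
  rw [doubleMul, doublePi_pairVec_add_allOne, permAct_mul, permAct_swapHalves, permAct_diagPerm,
    pairVec_add, HFPCode.mul, HFPCode.mul, add_right_comm]

lemma ncard_doubleCode : (doubleCode e H).ncard = 2 * m := by
  have hm : n + n = m := by simpa using Fintype.card_congr e
  have hdisj : Disjoint ((fun x => pairVec e x x) '' H.C)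
      ((fun x => pairVec e x (x + allOne n)) '' H.C) := by
    rw [Set.disjoint_left]
    rintro _ ⟨x, -, rfl⟩ ⟨y, -, hxy⟩
    obtain ⟨rfl, h⟩ := (pairVec_inj e).mp hxy
    exact add_allOne_ne_self H.pos y h
  rw [doubleCode, Set.ncard_union_eq hdisj,
    Set.InjOn.ncard_image fun x _ y _ h => ((pairVec_inj e).mp h).1,
    Set.InjOn.ncard_image fun x _ y _ h => ((pairVec_inj e).mp h).1, H.card_eq, ← hm]
  ring

lemma two_mul_hammingDist_doubleCode {z w : Vec m} (hz : z ∈ doubleCode e H)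
    (hw : w ∈ doubleCode e H) (hzw : z ≠ w) (hwz : w ≠ z + allOne m) :
    2 * hammingDist z w = m := by
  have hm : n + n = m := by simpa using Fintype.card_congr e
  have hcompl := hammingDist_add_hammingDist_add_allOne (n := n)
  rcases hz with ⟨x, hx, rfl⟩ | ⟨x, hx, rfl⟩ <;>
    rcases hw with ⟨y, hy, rfl⟩ | ⟨y, hy, rfl⟩ <;>
    simp only [pairVec_add_allOne, ne_eq, pairVec_inj, and_self, add_assoc, ZModModule.add_self,
      add_zero, not_and] at hzw hwz <;>
    rw [hammingDist_pairVec]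
  · have := H.dist_eq x hx y hy hzw hwz
    omega
  · have := hcompl x y
    omega
  · have := hcompl y x
    rw [hammingDist_comm x y, hammingDist_comm (x + allOne n) y]
    omega
  · have hxy : x ≠ y := by rintro rfl; exact hzw rfl rfl
    have hyx : y ≠ x + allOne n := by
      rintro rfl; exact hwz rfl (by rw [add_assoc, ZModModule.add_self, add_zero])
    have := H.dist_eq x hx y hy hxy hyx
    rw [hammingDist_add_right_eq]
    omega

lemma doubleMul_mem {z w : Vec m} (hz : z ∈ doubleCode e H) (hw : w ∈ doubleCode e H) :
    doubleMul e H z w ∈ doubleCode e H := by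
  rcases hz with ⟨x, hx, rfl⟩ | ⟨x, hx, rfl⟩ <;>
    rcases hw with ⟨y, hy, rfl⟩ | ⟨y, hy, rfl⟩ <;>
    simp only [doubleMul_pairVec_self, doubleMul_pairVec_add_allOne, H.mul_add_allOne,
      pairVec_mem_doubleCode_iff, true_or, or_true, and_true]
  exacts [H.mul_mem' hx hy, H.mul_mem' hx hy, H.mul_mem' hx hy,
    H.add_allOne_mem _ (H.mul_mem' hx hy)]

lemma doublePi_doubleMul {z w : Vec m} (hz : z ∈ doubleCode e H) (hw : w ∈ doubleCode e H) :
    doublePi e H (doubleMul e H z w) = doublePi e H z * doublePi e H w := by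
  rcases hz with ⟨x, hx, rfl⟩ | ⟨x, hx, rfl⟩ <;>
    rcases hw with ⟨y, hy, rfl⟩ | ⟨y, hy, rfl⟩ <;>
    simp only [doubleMul_pairVec_self, doubleMul_pairVec_add_allOne, H.mul_add_allOne,
      doublePi_pairVec_self, doublePi_pairVec_add_allOne, H.π_add_allOne (H.mul_mem' hx hy),
      H.π_mul_eq_mul hx hy, diagPerm_mul, mul_assoc]
  · rw [swapHalves_mul_diagPerm]
  · rw [← mul_assoc (swapHalves e), swapHalves_mul_diagPerm, mul_assoc, swapHalves_mul_self,
      mul_one]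

lemma doublePi_apply_ne {z : Vec m} (hz : z ∈ doubleCode e H) (hz0 : z ≠ 0)
    (hzu : z ≠ allOne m) (i : Fin m) : doublePi e H z i ≠ i := by
  rcases hz with ⟨x, hx, rfl⟩ | ⟨x, hx, rfl⟩
  · rw [doublePi_pairVec_self]
    refine diagPerm_apply_ne e (H.π_fixedfree x hx ?_ ?_) i
    · rintro rfl; exact hz0 (pairVec_zero e)
    · rintro rfl; exact hzu (pairVec_allOne e)
  · rw [doublePi_pairVec_add_allOne]
    exact diagPerm_mul_swapHalves_apply_ne e _ i

def double : HFPCode m where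
  C := doubleCode e H
  π := doublePi e H
  zero_mem := pairVec_zero e ▸ (pairVec_mem_doubleCode_iff e H).mpr ⟨H.zero_mem, .inl rfl⟩
  card_eq := ncard_doubleCode e H
  allOne_mem :=
    pairVec_allOne e ▸ (pairVec_mem_doubleCode_iff e H).mpr ⟨H.allOne_mem, .inl rfl⟩
  add_allOne_mem := by
    rintro _ (⟨x, hx, rfl⟩ | ⟨x, hx, rfl⟩) <;>
      rw [pairVec_add_allOne, pairVec_mem_doubleCode_iff] <;>
      exact ⟨H.add_allOne_mem x hx, by simp⟩
  dist_eq _ hz _ hw := two_mul_hammingDist_doubleCode e H hz hw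
  mul_mem _ hz _ hw := doubleMul_mem e H hz hw
  π_mul _ hz _ hw := doublePi_doubleMul e H hz hw
  π_zero := by rw [← pairVec_zero e, doublePi_pairVec_self, H.π_zero, diagPerm_one]
  π_allOne := by rw [← pairVec_allOne e, doublePi_pairVec_self, H.π_allOne, diagPerm_one]
  π_fixedfree _ hz := doublePi_apply_ne e H hz

lemma pairVec_eq_zero_iff {x y : Vec n} : pairVec e x y = 0 ↔ x = 0 ∧ y = 0 := by
  rw [← pairVec_zero e, pairVec_inj]

lemma double_mul_pairVec_self (x y y' : Vec n) :
    (double e H).mul (pairVec e x x) (pairVec e y y') = pairVec e (H.mul x y) (H.mul x y') :=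
  doubleMul_pairVec_self e H x y y'

lemma double_mul_pairVec_add_allOne (x y y' : Vec n) :
    (double e H).mul (pairVec e x (x + allOne n)) (pairVec e y y') =
      pairVec e (H.mul x y') (H.mul x y + allOne n) :=
  doubleMul_pairVec_add_allOne e H x y y'

lemma double_mul_pairVec_zero_allOne (y y' : Vec n) :
    (double e H).mul (pairVec e 0 (allOne n)) (pairVec e y y') = pairVec e y' (y + allOne n) := by
  simpa [H.zero_mul] using double_mul_pairVec_add_allOne e H 0 y y'

lemma double_mul_comm (hc : ∀ x ∈ H.C, ∀ y ∈ H.C, H.mul x y = H.mul y x) :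
    ∀ z ∈ (double e H).C, ∀ w ∈ (double e H).C,
      (double e H).mul z w = (double e H).mul w z := by
  rintro _ (⟨x, hx, rfl⟩ | ⟨x, hx, rfl⟩) _ (⟨y, hy, rfl⟩ | ⟨y, hy, rfl⟩) <;>
    simp only [double_mul_pairVec_self, double_mul_pairVec_add_allOne, H.mul_add_allOne,
      hc x hx y hy]

lemma double_pow_pairVec_self (a : Vec n) (i : ℕ) :
    (double e H).pow (pairVec e a a) i = pairVec e (H.pow a i) (H.pow a i) := by
  induction i with
  | zero => exact (pairVec_zero e).symm
  | succ i ih => rw [HFPCode.pow_succ, ih, double_mul_pairVec_self]; rfl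

lemma double_mul_pairVec_self_of_eq_zero_or_eq_allOne (w : Vec n) {p q : Vec n}
    (hp : p = 0 ∨ p = allOne n) (hq : q = 0 ∨ q = allOne n) :
    (double e H).mul (pairVec e w w) (pairVec e p q) = pairVec e (w + p) (w + q) := by
  rw [double_mul_pairVec_self, H.mul_of_eq_zero_or_eq_allOne w hp,
    H.mul_of_eq_zero_or_eq_allOne w hq]

section PowersOfHalfAllOne

variable {e H}

lemma double_pow_pairVec_zero_allOne_zero :
    (double e H).pow (pairVec e 0 (allOne n)) 0 = pairVec e 0 0 :=
  (pairVec_zero e).symm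

lemma double_pow_pairVec_zero_allOne_one :
    (double e H).pow (pairVec e 0 (allOne n)) 1 = pairVec e 0 (allOne n) :=
  HFPCode.mul_zero _ _

lemma double_pow_pairVec_zero_allOne_two :
    (double e H).pow (pairVec e 0 (allOne n)) 2 = pairVec e (allOne n) (allOne n) := by
  rw [HFPCode.pow_succ, double_pow_pairVec_zero_allOne_one, double_mul_pairVec_zero_allOne,
    zero_add]

lemma double_pow_pairVec_zero_allOne_three :
    (double e H).pow (pairVec e 0 (allOne n)) 3 = pairVec e (allOne n) 0 := by
  rw [HFPCode.pow_succ, double_pow_pairVec_zero_allOne_two, double_mul_pairVec_zero_allOne,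
    ZModModule.add_self]

lemma double_pow_pairVec_zero_allOne_four : (double e H).pow (pairVec e 0 (allOne n)) 4 = 0 := by
  rw [HFPCode.pow_succ, double_pow_pairVec_zero_allOne_three, double_mul_pairVec_zero_allOne,
    ZModModule.add_self, pairVec_zero]

end PowersOfHalfAllOne

lemma kerSet_double :
    kerSet (double e H).C = (fun z => pairVec e z z) '' kerSet H.C ∪
      (fun z => pairVec e z (z + allOne n)) '' kerSet H.C := by
  have hcode : (double e H).C = doubleCode e H := rfl
  ext z
  simp only [hcode, mem_kerSet_iff]
  have mem_kerSet_of_add_mem {y y' : Vec n}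
      (h : ∀ w ∈ doubleCode e H, pairVec e y y' + w ∈ doubleCode e H) : y ∈ kerSet H.C := mem_kerSet_iff.mpr fun x hx => by
    have := h _ (Set.mem_union_left _ ⟨x, hx, rfl⟩)
    rw [pairVec_add, pairVec_mem_doubleCode_iff] at this
    exact this.1
  constructor
  · intro hz
    rcases add_zero z ▸ hz 0 (double e H).zero_mem with ⟨y, -, rfl⟩ | ⟨y, -, rfl⟩
    exacts [.inl ⟨y, mem_kerSet_of_add_mem hz, rfl⟩,
      .inr ⟨y, mem_kerSet_of_add_mem hz, rfl⟩]
  · rintro (⟨y, hy, rfl⟩ | ⟨y, hy, rfl⟩) _ (⟨x, hx, rfl⟩ | ⟨x, hx, rfl⟩) <;>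
    rw [mem_kerSet_iff] at hy <;>
    rw [pairVec_add, pairVec_mem_doubleCode_iff] <;>
    refine ⟨hy x hx, ?_⟩
    · exact .inl rfl
    · exact .inr (add_assoc _ _ _).symm
    · exact .inr (add_right_comm _ _ _)
    · refine .inl ?_
      rw [add_add_add_comm, ZModModule.add_self, add_zero]

section Generators

variable {a : Vec n}

lemma double_pow_mul_pow_eq_zero {N : ℕ}
    (hdir : ∀ i k : ℕ, i < N → k < 2 →
      H.mul (H.pow a i) (H.pow (allOne n) k) = 0 → i = 0 ∧ k = 0)
    {i j : ℕ} (hi : i < N) (hj : j < 4)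
    (h : (double e H).mul ((double e H).pow (pairVec e a a) i)
      ((double e H).pow (pairVec e 0 (allOne n)) j) = 0) :
    i = 0 ∧ j = 0 := by
  have hdir' : ∀ k < 2, H.pow a i + H.pow (allOne n) k = 0 → i = 0 ∧ k = 0 := fun k hk h =>
    hdir i k hi hk (by rwa [H.mul_of_eq_zero_or_eq_allOne _ (H.pow_allOne k)])
  have hu : allOne n ≠ 0 := allOne_ne_zero H.pos
  rw [double_pow_pairVec_self] at h
  interval_cases j
  · rw [double_pow_pairVec_zero_allOne_zero, double_mul_pairVec_self_of_eq_zero_or_eq_allOne e H _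
      (.inl rfl) (.inl rfl), pairVec_eq_zero_iff] at h
    exact ⟨(hdir' 0 two_pos h.1).1, rfl⟩
  · rw [double_pow_pairVec_zero_allOne_one, double_mul_pairVec_self_of_eq_zero_or_eq_allOne e H _
      (.inl rfl) (.inr rfl), pairVec_eq_zero_iff, add_zero] at h
    obtain ⟨h1, h2⟩ := h
    rw [h1, zero_add] at h2
    exact absurd h2 hu
  · rw [double_pow_pairVec_zero_allOne_two, double_mul_pairVec_self_of_eq_zero_or_eq_allOne e H _
      (.inr rfl) (.inr rfl), pairVec_eq_zero_iff, ← H.pow_one (allOne n)] at h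
    exact absurd (hdir' 1 one_lt_two h.1).2 one_ne_zero
  · rw [double_pow_pairVec_zero_allOne_three, double_mul_pairVec_self_of_eq_zero_or_eq_allOne e H _
      (.inr rfl) (.inl rfl), pairVec_eq_zero_iff, add_zero] at h
    obtain ⟨h1, h2⟩ := h
    rw [h2, zero_add] at h1
    exact absurd h1 hu

lemma double_exists_eq_pow_mul_pow
    (hgen : ∀ x ∈ H.C, ∃ i k : ℕ, x = H.mul (H.pow a i) (H.pow (allOne n) k)) :
    ∀ z ∈ (double e H).C, ∃ i j : ℕ,
      z = (double e H).mul ((double e H).pow (pairVec e a a) i)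
        ((double e H).pow (pairVec e 0 (allOne n)) j) := by
  simp only [double_pow_pairVec_self]
  rintro _ (⟨x, hx, rfl⟩ | ⟨x, hx, rfl⟩) <;>
    obtain ⟨i, p, rfl | rfl, rfl⟩ := H.exists_eq_pow_add hgen hx
  · refine ⟨i, 0, ?_⟩
    rw [double_pow_pairVec_zero_allOne_zero, double_mul_pairVec_self_of_eq_zero_or_eq_allOne e H _
      (.inl rfl) (.inl rfl)]
  · refine ⟨i, 2, ?_⟩
    rw [double_pow_pairVec_zero_allOne_two, double_mul_pairVec_self_of_eq_zero_or_eq_allOne e H _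
      (.inr rfl) (.inr rfl)]
  · refine ⟨i, 1, ?_⟩
    rw [double_pow_pairVec_zero_allOne_one, double_mul_pairVec_self_of_eq_zero_or_eq_allOne e H _
      (.inl rfl) (.inr rfl), add_zero]
  · refine ⟨i, 3, ?_⟩
    rw [double_pow_pairVec_zero_allOne_three, double_mul_pairVec_self_of_eq_zero_or_eq_allOne e H _
      (.inr rfl) (.inl rfl)]
    simp only [add_assoc, ZModModule.add_self, add_zero]

end Generators

end Doubling

def halvesEquiv (t : ℕ) : Fin (4 * t) ⊕ Fin (4 * t) ≃ Fin (8 * t) :=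
  finSumFinEquiv.trans (finCongr (by ring))

lemma pairVec_halvesEquiv_zero_allOne (t : ℕ) :
    pairVec (halvesEquiv t) 0 (allOne (4 * t)) = euVec8 t := by
  funext i
  obtain ⟨s | s, rfl⟩ := (halvesEquiv t).surjective i <;>
    simp only [pairVec_apply_inl, pairVec_apply_inr] <;> simp [allOne, halvesEquiv, euVec8]

lemma pairVec_halvesEquiv_allOne_zero (t : ℕ) :
    pairVec (halvesEquiv t) (allOne (4 * t)) 0 = ueVec8 t := by
  funext i
  obtain ⟨s | s, rfl⟩ := (halvesEquiv t).surjective i <;>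
    simp only [pairVec_apply_inl, pairVec_apply_inr] <;> simp [allOne, halvesEquiv, ueVec8]

/-- From an HFP(4t,2_u)-code (circulant Hadamard code) of length `4t` with kernel of
dimension `1`, one obtains an HFP(4t,4_u)-code of length `8t` whose kernel is exactly
`{e, u, (e_{4t},u_{4t}), (u_{4t},e_{4t})}`. -/
theorem doubling_circulant (t : ℕ) (H : HFPCode (4 * t)) (a : Vec (4 * t))
    (ha : a ∈ H.C)
    (haord : H.pow a (4 * t) = 0 ∧ ∀ j : ℕ, 0 < j → j < 4 * t → H.pow a j ≠ 0)
    (hdir : ∀ i k : ℕ, i < 4 * t → k < 2 →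
      H.mul (H.pow a i) (H.pow (allOne (4 * t)) k) = 0 → i = 0 ∧ k = 0)
    (hgen : ∀ x ∈ H.C, ∃ i k : ℕ, x = H.mul (H.pow a i) (H.pow (allOne (4 * t)) k))
    (hker : kerDim H.C = 1) :
    ∃ (Hh : HFPCode (8 * t)) (ah bh : Vec (8 * t)),
      ah ∈ Hh.C ∧ bh ∈ Hh.C ∧
      (∀ x ∈ Hh.C, ∀ y ∈ Hh.C, Hh.mul x y = Hh.mul y x) ∧
      Hh.pow ah (4 * t) = 0 ∧ (∀ j : ℕ, 0 < j → j < 4 * t → Hh.pow ah j ≠ 0) ∧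
      Hh.pow bh 4 = 0 ∧ (∀ j : ℕ, 0 < j → j < 4 → Hh.pow bh j ≠ 0) ∧
      Hh.pow bh 2 = allOne (8 * t) ∧
      (∀ i j : ℕ, i < 4 * t → j < 4 →
        Hh.mul (Hh.pow ah i) (Hh.pow bh j) = 0 → i = 0 ∧ j = 0) ∧
      (∀ x ∈ Hh.C, ∃ i j : ℕ, x = Hh.mul (Hh.pow ah i) (Hh.pow bh j)) ∧
      kerSet Hh.C = {0, allOne (8 * t), euVec8 t, ueVec8 t} := by
  refine ⟨double (halvesEquiv t) H, pairVec (halvesEquiv t) a a,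
    pairVec (halvesEquiv t) 0 (allOne (4 * t)),
    (pairVec_mem_doubleCode_iff (halvesEquiv t) H).mpr ⟨ha, .inl rfl⟩,
    (pairVec_mem_doubleCode_iff (halvesEquiv t) H).mpr ⟨H.zero_mem, .inr (zero_add _).symm⟩,
    double_mul_comm (halvesEquiv t) H (H.mul_comm_of_generated ha hgen), ?_, ?_,
    double_pow_pairVec_zero_allOne_four, ?_, ?_,
    fun i j hi hj => double_pow_mul_pow_eq_zero (halvesEquiv t) H hdir hi hj,
    double_exists_eq_pow_mul_pow (halvesEquiv t) H hgen, ?_⟩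
  · rw [double_pow_pairVec_self, haord.1, pairVec_zero]
  · intro j hj0 hj h
    rw [double_pow_pairVec_self, pairVec_eq_zero_iff] at h
    exact haord.2 j hj0 hj h.1
  · intro j hj0 hj
    have hu := allOne_ne_zero H.pos
    interval_cases j <;>
      simp only [double_pow_pairVec_zero_allOne_one, double_pow_pairVec_zero_allOne_two,
        double_pow_pairVec_zero_allOne_three, ne_eq, pairVec_eq_zero_iff, hu, and_false,
        false_and, not_false_eq_true]
  · rw [double_pow_pairVec_zero_allOne_two, pairVec_allOne]
  · rw [kerSet_double, H.kerSet_eq_of_kerDim_eq_one hker]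
    simp only [Set.image_pair, zero_add, ZModModule.add_self, pairVec_zero, pairVec_allOne,
      pairVec_halvesEquiv_zero_allOne, pairVec_halvesEquiv_allOne_zero, Set.insert_union,
      Set.singleton_union]
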